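/- Fix s ∈ {2, 3, 4, 6} and a real number x > 0. Define F(z) = ∑_{n=0}^∞ z^{n+x} · (1/2+x)_n (1/s+x)_n ((s−1)/s+x)_n / ((1+x)_n)³ for real z ∈ (0,1). Then, writing θ for the differential operator z·d/dz, the function F satisfies θ³F(z) − z·(θ + 1/2)(θ + 1/s)(θ + (s−1)/s)F(z) = x³·z^x for every z ∈ (0,1). -/

import Mathlib

open Real

/-- The differential operator `θ : f ↦ z·f′(z)`. -/
noncomputable def thetaOp (f : ℝ → ℝ) : ℝ → ℝ := fun z => z * deriv f z

/-- The differential operator `θ + c : f ↦ z·f′(z) + c·f(z)`. -/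
noncomputable def thetaOpShift (c : ℝ) (f : ℝ → ℝ) : ℝ → ℝ := fun z => z * deriv f z + c * f z

/-!
On `(0, 1)` write `F(z) = z^x ∑ cₙ zⁿ`. For polynomially bounded coefficients the series may be
differentiated termwise, so `θ + t` acts on `z^x ∑ aₙ zⁿ` by `aₙ ↦ (n + x + t) aₙ`, while
multiplication by `z` shifts the coefficients by one. The left-hand side is therefore
`z^x ∑ (bₙ - b'ₙ₋₁) zⁿ` with `bₙ = (n + x)³ cₙ` and `b'ₙ = (n + x + 1/2)(n + x + 1/s)(n + x + (s-1)/s) cₙ`,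
and the Pochhammer recurrence `(n + 1 + x)³ cₙ₊₁ = (n + x + 1/2)(n + x + 1/s)(n + x + (s-1)/s) cₙ`
cancels every coefficient of the difference except `b₀ = x³`. Polynomial boundedness holds because each numerator
parameter is at most the denominator parameter `1 + x`, so that `0 < cₙ ≤ 1`.
-/

open Set

def PolyBounded (a : ℕ → ℝ) : Prop := ∃ C : ℝ, ∃ d : ℕ, ∀ n : ℕ, |a n| ≤ C * ((n : ℝ) + 1) ^ d

lemma summable_add_one_pow_mul_geometric (d : ℕ) {r : ℝ} (hr : ‖r‖ < 1) :
    Summable fun n : ℕ => ((n : ℝ) + 1) ^ d * r ^ n := by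
  have expand : ∀ n : ℕ, ((n : ℝ) + 1) ^ d * r ^ n
      = ∑ j ∈ Finset.range (d + 1), (d.choose j : ℝ) * ((n : ℝ) ^ j * r ^ n) := by
    intro n
    rw [add_pow, Finset.sum_mul]
    exact Finset.sum_congr rfl fun j _ => by ring
  simp only [expand]
  exact summable_sum fun j _ => (summable_pow_mul_geometric_of_norm_lt_one j hr).mul_left _

namespace PolyBounded

variable {a b : ℕ → ℝ}

lemma summable_mul_pow (ha : PolyBounded a) {z : ℝ} (hz : ‖z‖ < 1) :
    Summable fun n : ℕ => a n * z ^ n := by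
  obtain ⟨C, d, hC⟩ := ha
  refine .of_norm_bounded ((summable_add_one_pow_mul_geometric d (r := ‖z‖) (by simpa)).mul_left C)
    fun n => ?_
  rw [norm_mul, norm_pow, Real.norm_eq_abs, ← mul_assoc]
  exact mul_le_mul_of_nonneg_right (hC n) (by positivity)

lemma abs (ha : PolyBounded a) : PolyBounded fun n => |a n| := by
  simpa only [PolyBounded, abs_abs] using ha

lemma mul (ha : PolyBounded a) (hb : PolyBounded b) : PolyBounded fun n => a n * b n := by
  obtain ⟨C, d, hC⟩ := ha
  obtain ⟨D, e, hD⟩ := hb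
  refine ⟨C * D, d + e, fun n => ?_⟩
  have hC0 : 0 ≤ C * ((n : ℝ) + 1) ^ d := (abs_nonneg _).trans (hC n)
  calc |a n * b n| = |a n| * |b n| := abs_mul _ _
    _ ≤ C * ((n : ℝ) + 1) ^ d * (D * ((n : ℝ) + 1) ^ e) :=
        mul_le_mul (hC n) (hD n) (abs_nonneg _) hC0
    _ = C * D * ((n : ℝ) + 1) ^ (d + e) := by ring

end PolyBounded

lemma polyBounded_natCast_add (t : ℝ) : PolyBounded fun n => (n : ℝ) + t := by
  refine ⟨|t| + 1, 1, fun n => ?_⟩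
  have hn : (0 : ℝ) ≤ n := n.cast_nonneg
  rw [pow_one, abs_le]
  constructor <;> nlinarith [neg_abs_le t, le_abs_self t, abs_nonneg t]

lemma PolyBounded.natCast_mul {a : ℕ → ℝ} (ha : PolyBounded a) :
    PolyBounded fun n => (n : ℝ) * a n := by
  simpa using (polyBounded_natCast_add 0).mul ha

lemma PolyBounded.hasDerivAt_tsum_mul_pow {a : ℕ → ℝ} (ha : PolyBounded a) {z : ℝ}
    (hz : |z| < 1) :
    HasDerivAt (fun y => ∑' n : ℕ, a n * y ^ n) (∑' n : ℕ, a n * (n * z ^ (n - 1))) z := by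
  obtain ⟨r, hzr, hr1⟩ := exists_between hz
  have hr0 : 0 < r := (abs_nonneg z).trans_lt hzr
  have hnr : ‖r‖ < 1 := by rwa [Real.norm_eq_abs, abs_of_pos hr0]
  -- on `|y| < r` the `n`-th derivative is bounded by `|n aₙ| rⁿ⁻¹ = |n aₙ| rⁿ / r`
  refine hasDerivAt_tsum_of_isPreconnected
    (u := fun n => |n * a n| * r ^ n / r) (t := Metric.ball 0 r) (y₀ := 0)
    ((ha.natCast_mul.abs.summable_mul_pow hnr).div_const r)
    Metric.isOpen_ball (convex_ball 0 r).isPreconnected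
    (fun n y _ => (hasDerivAt_pow n y).const_mul (a n)) (fun n y hy => ?_)
    (Metric.mem_ball_self hr0) (ha.summable_mul_pow (by simp)) (by simpa using hzr)
  have hy : |y| ≤ r := by simpa using (mem_ball_zero_iff.mp hy).le
  rcases n with _ | m
  · simp only [CharP.cast_eq_zero, zero_mul, mul_zero, norm_zero]
    positivity
  · rw [Real.norm_eq_abs, pow_succ, mul_div_assoc, mul_div_cancel_right₀ _ hr0.ne',
      Nat.add_sub_cancel, abs_mul, abs_mul, abs_mul, abs_pow]
    calc |a (m + 1)| * (|((m + 1 : ℕ) : ℝ)| * |y| ^ m)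
        ≤ |a (m + 1)| * (|((m + 1 : ℕ) : ℝ)| * r ^ m) := by gcongr
      _ = _ := by ring

noncomputable def frobeniusSeries (x : ℝ) (a : ℕ → ℝ) (z : ℝ) : ℝ :=
  z ^ x * ∑' n : ℕ, a n * z ^ n

lemma mul_natCast_mul_pow_pred (z : ℝ) (n : ℕ) : z * (n * z ^ (n - 1)) = n * z ^ n := by
  rcases n with _ | m
  · simp
  · rw [Nat.add_sub_cancel, pow_succ]
    ring

section Frobenius

variable {x : ℝ} {a : ℕ → ℝ}

lemma thetaOpShift_frobeniusSeries (ha : PolyBounded a) (t : ℝ) {z : ℝ} (hz : z ∈ Ioo 0 1) :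
    thetaOpShift t (frobeniusSeries x a) z
      = frobeniusSeries x (fun n => ((n : ℝ) + (x + t)) * a n) z := by
  have hz1 : |z| < 1 := by rw [abs_of_pos hz.1]; exact hz.2
  have hderiv : deriv (frobeniusSeries x a) z
      = x * z ^ (x - 1) * (∑' n : ℕ, a n * z ^ n)
        + z ^ x * ∑' n : ℕ, a n * (n * z ^ (n - 1)) :=
    ((hasDerivAt_rpow_const (Or.inl hz.1.ne')).mul (ha.hasDerivAt_tsum_mul_pow hz1)).deriv
  have hpow : z * (x * z ^ (x - 1)) = x * z ^ x := by
    rw [rpow_sub_one hz.1.ne', mul_left_comm, mul_div_cancel₀ _ hz.1.ne']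
  have hshift : z * ∑' n : ℕ, a n * (n * z ^ (n - 1)) = ∑' n : ℕ, n * a n * z ^ n := by
    rw [← tsum_mul_left]
    exact tsum_congr fun n => by rw [mul_left_comm, mul_natCast_mul_pow_pred]; ring
  have hsplit : ∑' n : ℕ, ((n : ℝ) + (x + t)) * a n * z ^ n
      = ∑' n : ℕ, n * a n * z ^ n + (x + t) * ∑' n : ℕ, a n * z ^ n := by
    rw [← tsum_mul_left, ← Summable.tsum_add]
    · exact tsum_congr fun n => by ring
    · exact ha.natCast_mul.summable_mul_pow (by simpa using hz1)
    · exact (ha.summable_mul_pow (by simpa using hz1)).mul_left _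
  rw [thetaOpShift, hderiv]
  simp only [frobeniusSeries]
  rw [hsplit]
  linear_combination (∑' n : ℕ, a n * z ^ n) * hpow + z ^ x * hshift

lemma Set.EqOn.thetaOpShift_frobeniusSeries {f : ℝ → ℝ}
    (hf : EqOn f (frobeniusSeries x a) (Ioo 0 1)) (ha : PolyBounded a) (t : ℝ) :
    EqOn (thetaOpShift t f) (frobeniusSeries x fun n => ((n : ℝ) + (x + t)) * a n) (Ioo 0 1) := by
  intro z hz
  have hev : f =ᶠ[nhds z] frobeniusSeries x a := hf.eventuallyEq_of_mem (isOpen_Ioo.mem_nhds hz)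
  rw [← _root_.thetaOpShift_frobeniusSeries ha t hz, thetaOpShift, thetaOpShift, hev.deriv_eq, hf hz]

lemma frobeniusSeries_sub_mul {b : ℕ → ℝ} (ha : PolyBounded a) (hab : ∀ n, a (n + 1) = b n)
    {z : ℝ} (hz : |z| < 1) :
    frobeniusSeries x a z - z * frobeniusSeries x b z = a 0 * z ^ x := by
  have htail : ∑' n : ℕ, a (n + 1) * z ^ (n + 1) = z * ∑' n : ℕ, b n * z ^ n := by
    rw [← tsum_mul_left]
    exact tsum_congr fun n => by rw [hab, pow_succ]; ring
  rw [frobeniusSeries, frobeniusSeries, (ha.summable_mul_pow (by simpa using hz)).tsum_eq_zero_add,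
    htail]
  ring

lemma thetaOp_eq_thetaOpShift_zero (f : ℝ → ℝ) : thetaOp f = thetaOpShift 0 f := by
  funext z
  simp [thetaOp, thetaOpShift]

theorem frobeniusSeries_ode {F : ℝ → ℝ} {α β γ : ℝ} (ha : PolyBounded a)
    (hrec : ∀ n : ℕ, ((n : ℝ) + 1 + x) ^ 3 * a (n + 1)
      = (n + x + α) * (n + x + β) * (n + x + γ) * a n)
    (hF : EqOn F (frobeniusSeries x a) (Ioo 0 1)) :
    ∀ z ∈ Ioo (0 : ℝ) 1,
      thetaOp (thetaOp (thetaOp F)) z - z * thetaOpShift α (thetaOpShift β (thetaOpShift γ F)) z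
        = x ^ 3 * a 0 * z ^ x := by
  have hlin (t : ℝ) {b : ℕ → ℝ} (hb : PolyBounded b) :
      PolyBounded fun n => ((n : ℝ) + (x + t)) * b n :=
    (polyBounded_natCast_add _).mul hb
  have ha1 := hlin 0 ha
  have ha2 := hlin 0 ha1
  have hθ := ((hF.thetaOpShift_frobeniusSeries ha 0).thetaOpShift_frobeniusSeries ha1 0
    ).thetaOpShift_frobeniusSeries ha2 0
  have hb1 := hlin γ ha
  have hb2 := hlin β hb1
  have hshift := ((hF.thetaOpShift_frobeniusSeries ha γ).thetaOpShift_frobeniusSeries hb1 β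
    ).thetaOpShift_frobeniusSeries hb2 α
  intro z hz
  rw [thetaOp_eq_thetaOpShift_zero, thetaOp_eq_thetaOpShift_zero, thetaOp_eq_thetaOpShift_zero,
    hθ hz, hshift hz, frobeniusSeries_sub_mul (hlin 0 ha2) _ (by rw [abs_of_pos hz.1]; exact hz.2)]
  · ring
  · intro n
    push_cast
    linear_combination hrec n

end Frobenius

noncomputable def cubicCoeff (p q r u : ℝ) (n : ℕ) : ℝ :=
  (ascPochhammer ℝ n).eval p * (ascPochhammer ℝ n).eval q * (ascPochhammer ℝ n).eval r /
    (ascPochhammer ℝ n).eval u ^ 3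

section CubicCoeff

variable {p q r u : ℝ}

@[simp]
lemma cubicCoeff_zero : cubicCoeff p q r u 0 = 1 := by
  simp [cubicCoeff]

lemma cubicCoeff_succ (hu : 0 < u) (n : ℕ) :
    ((n : ℝ) + u) ^ 3 * cubicCoeff p q r u (n + 1)
      = (n + p) * (n + q) * (n + r) * cubicCoeff p q r u n := by
  have hpos := ascPochhammer_pos n u hu
  have hnu : 0 < (n : ℝ) + u := by positivity
  simp only [cubicCoeff, ascPochhammer_succ_eval]
  field_simp
  ring

lemma cubicCoeff_pos (hp : 0 < p) (hq : 0 < q) (hr : 0 < r) (hu : 0 < u) (n : ℕ) :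
    0 < cubicCoeff p q r u n := by
  have := ascPochhammer_pos n p hp
  have := ascPochhammer_pos n q hq
  have := ascPochhammer_pos n r hr
  have := ascPochhammer_pos n u hu
  unfold cubicCoeff
  positivity

lemma cubicCoeff_le_one (hp : 0 < p) (hq : 0 < q) (hr : 0 < r) (hpu : p ≤ u) (hqu : q ≤ u)
    (hru : r ≤ u) (n : ℕ) : cubicCoeff p q r u n ≤ 1 := by
  have hu : 0 < u := hp.trans_le hpu
  induction n with
  | zero => simp
  | succ n ih =>
    have hnu : 0 < ((n : ℝ) + u) ^ 3 := by positivity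
    have hfactors : ((n : ℝ) + p) * (n + q) * (n + r) ≤ ((n : ℝ) + u) ^ 3 := by
      rw [pow_three, ← mul_assoc]
      gcongr
    refine le_trans (le_of_mul_le_mul_left ?_ hnu) ih
    rw [cubicCoeff_succ hu]
    exact mul_le_mul_of_nonneg_right hfactors (cubicCoeff_pos hp hq hr hu n).le

lemma polyBounded_cubicCoeff (hp : 0 < p) (hq : 0 < q) (hr : 0 < r) (hpu : p ≤ u) (hqu : q ≤ u)
    (hru : r ≤ u) : PolyBounded (cubicCoeff p q r u) := by
  refine ⟨1, 0, fun n => ?_⟩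
  rw [abs_of_pos (cubicCoeff_pos hp hq hr (hp.trans_le hpu) n), pow_zero, mul_one]
  exact cubicCoeff_le_one hp hq hr hpu hqu hru n

end CubicCoeff

lemma one_div_natCast_mem_Icc (s : ℕ) : 1 / (s : ℝ) ∈ Icc 0 1 :=
  ⟨by positivity, by simpa using Nat.cast_inv_le_one (α := ℝ) s⟩

lemma natCast_sub_one_div_self_mem_Icc (s : ℕ) : ((s : ℝ) - 1) / s ∈ Icc 0 1 := by
  rcases s.eq_zero_or_pos with rfl | hs
  · -- `(0 - 1) / 0 = 0`
    simp
  · have : (1 : ℝ) ≤ s := by exact_mod_cast hs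
    exact ⟨div_nonneg (by linarith) (by linarith), div_le_one_of_le₀ (by linarith) (by linarith)⟩

theorem stmt_0_general (s : ℕ) (x : ℝ) (hx : 0 < x)
    (F : ℝ → ℝ)
    (hF : ∀ z ∈ Set.Ioo (0 : ℝ) 1, F z =
      ∑' n : ℕ, z ^ ((n : ℝ) + x) *
        ((ascPochhammer ℝ n).eval (1 / 2 + x) * (ascPochhammer ℝ n).eval (1 / (s : ℝ) + x) *
          (ascPochhammer ℝ n).eval (((s : ℝ) - 1) / (s : ℝ) + x)) /
        ((ascPochhammer ℝ n).eval (1 + x)) ^ 3) :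
    ∀ z ∈ Set.Ioo (0 : ℝ) 1,
      thetaOp (thetaOp (thetaOp F)) z -
        z * thetaOpShift (1 / 2)
              (thetaOpShift (1 / (s : ℝ)) (thetaOpShift (((s : ℝ) - 1) / (s : ℝ)) F)) z =
        x ^ 3 * z ^ x := by
  obtain ⟨hinv₀, hinv₁⟩ := one_div_natCast_mem_Icc s
  obtain ⟨hcompl₀, hcompl₁⟩ := natCast_sub_one_div_self_mem_Icc s
  have hseries : EqOn F (frobeniusSeries x
      (cubicCoeff (1 / 2 + x) (1 / (s : ℝ) + x) (((s : ℝ) - 1) / s + x) (1 + x))) (Ioo 0 1) := by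
    intro z hz
    rw [hF z hz, frobeniusSeries, ← tsum_mul_left]
    refine tsum_congr fun n => ?_
    rw [rpow_add hz.1, rpow_natCast, cubicCoeff]
    ring
  have hrec (n : ℕ) := cubicCoeff_succ (p := 1 / 2 + x) (q := 1 / (s : ℝ) + x)
    (r := ((s : ℝ) - 1) / s + x) (by positivity : 0 < 1 + x) n
  have hode := frobeniusSeries_ode (α := 1 / 2) (β := 1 / (s : ℝ)) (γ := ((s : ℝ) - 1) / s)
    (polyBounded_cubicCoeff (by positivity) (by linarith) (by linarith) (by linarith)
      (by linarith) (by linarith))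
    (fun n => by linear_combination hrec n) hseries
  simpa using hode

theorem stmt_0 (s : ℕ) (hs : s = 2 ∨ s = 3 ∨ s = 4 ∨ s = 6) (x : ℝ) (hx : 0 < x)
    (F : ℝ → ℝ)
    (hF : ∀ z ∈ Set.Ioo (0 : ℝ) 1, F z =
      ∑' n : ℕ, z ^ ((n : ℝ) + x) *
        ((ascPochhammer ℝ n).eval (1 / 2 + x) * (ascPochhammer ℝ n).eval (1 / (s : ℝ) + x) *
          (ascPochhammer ℝ n).eval (((s : ℝ) - 1) / (s : ℝ) + x)) /
        ((ascPochhammer ℝ n).eval (1 + x)) ^ 3) :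
    ∀ z ∈ Set.Ioo (0 : ℝ) 1,
      thetaOp (thetaOp (thetaOp F)) z -
        z * thetaOpShift (1 / 2)
              (thetaOpShift (1 / (s : ℝ)) (thetaOpShift (((s : ℝ) - 1) / (s : ℝ)) F)) z =
        x ^ 3 * z ^ x :=
  stmt_0_general s x hx F hF
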